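/- Minimum value of Nesterov's hard function with unit parameters: for L(θ) as above with a > 0 and b = c = d = 1, the minimum value is L(θ*) = (a/8)(−1 + 1/(n+1)) = −(a/8)·n/(n+1). -/

import Mathlib

/-!
Writing `Q(x) = x₀² + ∑ (xᵢ - xᵢ₊₁)² + x_{n-1}²`, the function is `L = (a/4)(Q/2 - x₀)`, a convex
quadratic. The point `θ*` decreases in steps of `c = 1/(n+1)` from `1 - c` down to `c`, and
telescoping the cross terms shows that the polar form of `Q` at `θ*` is `h ↦ h₀`. Hence
`L(θ* + h) = L(θ*) + (a/8) Q(h) ≥ L(θ*)`, and `L(θ*) = (a/4)(θ*₀/2 - θ*₀) = -(a/8)·n/(n+1)`.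
-/

open Finset

def chainForm (m : ℕ) (x : ℕ → ℝ) : ℝ :=
  x 0 ^ 2 + ∑ i ∈ range m, (x i - x (i + 1)) ^ 2 + x m ^ 2

noncomputable def chainObjective (a : ℝ) (m : ℕ) (x : ℕ → ℝ) : ℝ :=
  a / 4 * (1 / 2 * chainForm m x - x 0)

noncomputable def zeroExtend {n : ℕ} (θ : Fin n → ℝ) (i : ℕ) : ℝ :=
  if hi : i < n then θ ⟨i, hi⟩ else 0

lemma zeroExtend_of_lt {n : ℕ} (θ : Fin n → ℝ) {i : ℕ} (hi : i < n) :
    zeroExtend θ i = θ ⟨i, hi⟩ :=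
  dif_pos hi

lemma chainForm_nonneg (m : ℕ) (x : ℕ → ℝ) : 0 ≤ chainForm m x := by
  unfold chainForm
  have := sum_nonneg fun i (_ : i ∈ range m) => sq_nonneg (x i - x (i + 1))
  positivity

lemma sum_range_sq_sub_add_const (m : ℕ) (h : ℕ → ℝ) (c : ℝ) :
    ∑ i ∈ range m, (h i - h (i + 1) + c) ^ 2
      = ∑ i ∈ range m, (h i - h (i + 1)) ^ 2 + 2 * c * (h 0 - h m) + m * c ^ 2 := by
  simp only [add_sq, sum_add_distrib, ← sum_mul, ← mul_sum, sum_range_sub', sum_const,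
    card_range, nsmul_eq_mul]
  ring

section ConstantStep

variable {m : ℕ} {x : ℕ → ℝ} {c : ℝ} (hstep : ∀ i < m, x i - x (i + 1) = c)
include hstep

lemma chainForm_eq_of_step : chainForm m x = x 0 ^ 2 + m * c ^ 2 + x m ^ 2 := by
  rw [chainForm, sum_congr rfl fun i hi => by rw [hstep i (mem_range.1 hi)], sum_const,
    card_range, nsmul_eq_mul]

lemma chainForm_add_of_step (h : ℕ → ℝ) :
    chainForm m (x + h)
      = chainForm m x + 2 * ((x 0 + c) * h 0 + (x m - c) * h m) + chainForm m h := by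
  have hsum : ∑ i ∈ range m, ((x + h) i - (x + h) (i + 1)) ^ 2
      = ∑ i ∈ range m, (h i - h (i + 1) + c) ^ 2 :=
    sum_congr rfl fun i hi => by
      rw [Pi.add_apply, Pi.add_apply, ← hstep i (mem_range.1 hi)]; ring
  rw [chainForm_eq_of_step hstep, chainForm, hsum, sum_range_sq_sub_add_const, chainForm]
  simp only [Pi.add_apply]
  ring

lemma last_eq_of_step : x m = x 0 - m * c := by
  have := sum_range_sub' x m
  rw [sum_congr rfl fun i hi => hstep i (mem_range.1 hi), sum_const, card_range,
    nsmul_eq_mul] at this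
  linarith

variable (hfirst : x 0 + c = 1) (hlast : x m = c)
include hfirst hlast

lemma chainObjective_add_of_step (a : ℝ) (h : ℕ → ℝ) :
    chainObjective a m (x + h) = chainObjective a m x + a / 8 * chainForm m h := by
  simp only [chainObjective, chainForm_add_of_step hstep, hlast, Pi.add_apply]
  rw [hfirst]
  ring

lemma chainForm_eq_first_of_step : chainForm m x = x 0 := by
  have hc : (m + 2) * c = 1 := by linarith [last_eq_of_step hstep]
  rw [chainForm_eq_of_step hstep, hlast, show x 0 = 1 - c by linarith]
  linear_combination c * hc

lemma chainObjective_eq_of_step (a : ℝ) : chainObjective a m x = -(a / 8) * x 0 := by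
  rw [chainObjective, chainForm_eq_first_of_step hstep hfirst hlast]
  ring

end ConstantStep

/-- Minimum value of Nesterov's hard function with `a > 0` and `b = c = d = 1`:
the minimizer `θ*ᵢ = (n-i+1)/(n+1)` (1-based) achieves
`L(θ*) = (a/8)(-1 + 1/(n+1)) = -(a/8)·n/(n+1)`. -/
theorem stmt18 (n : ℕ) (hn : 1 ≤ n) (a : ℝ) (ha : 0 < a)
    (Lf : (Fin n → ℝ) → ℝ)
    (hLf : ∀ θ : Fin n → ℝ, Lf θ = (a / 4) *
      ((1 / 2) * ((θ ⟨0, by omega⟩) ^ 2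
        + ∑ i : Fin (n - 1),
            (θ ⟨i.1, by have := i.2; omega⟩ - θ ⟨i.1 + 1, by have := i.2; omega⟩) ^ 2
        + (θ ⟨n - 1, by omega⟩) ^ 2)
      - θ ⟨0, by omega⟩))
    (θstar : Fin n → ℝ)
    (hθstar : ∀ i : Fin n, θstar i = ((n : ℝ) - (i : ℕ)) / ((n : ℝ) + 1)) :
    (∀ θ : Fin n → ℝ, Lf θstar ≤ Lf θ) ∧
    Lf θstar = (a / 8) * (-1 + 1 / ((n : ℝ) + 1)) ∧
    (a / 8) * (-1 + 1 / ((n : ℝ) + 1)) = -(a / 8) * ((n : ℝ) / ((n : ℝ) + 1)) := by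
  have hLf' : ∀ θ, Lf θ = chainObjective a (n - 1) (zeroExtend θ) := by
    intro θ
    rw [hLf, chainObjective, chainForm,
      ← Fin.sum_univ_eq_sum_range (fun i => (zeroExtend θ i - zeroExtend θ (i + 1)) ^ 2),
      zeroExtend_of_lt θ hn, zeroExtend_of_lt θ (by omega : n - 1 < n)]
    congr 5
    refine sum_congr rfl fun i _ => ?_
    rw [zeroExtend_of_lt θ (by omega), zeroExtend_of_lt θ (by omega)]
  set x := zeroExtend θstar with hxdef
  have hx : ∀ i < n, x i = ((n : ℝ) - i) / (n + 1) := fun i hi => by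
    rw [hxdef, zeroExtend_of_lt θstar hi, hθstar]
  have hstep : ∀ i < n - 1, x i - x (i + 1) = 1 / (n + 1) := fun i hi => by
    rw [hx i (by omega), hx (i + 1) (by omega)]
    push_cast
    ring
  have hfirst : x 0 + 1 / (n + 1) = 1 := by
    rw [hx 0 hn]
    field_simp
    simp
  have hlast : x (n - 1) = 1 / (n + 1) := by
    rw [hx (n - 1) (by omega), Nat.cast_sub hn]
    ring
  have hvalue_eq : (a / 8) * (-1 + 1 / ((n : ℝ) + 1)) = -(a / 8) * ((n : ℝ) / ((n : ℝ) + 1)) := by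
    field_simp
    ring
  refine ⟨fun θ => ?_, ?_, hvalue_eq⟩
  · rw [hLf', hLf', ← add_sub_cancel x (zeroExtend θ),
      chainObjective_add_of_step hstep hfirst hlast]
    exact le_add_of_nonneg_right (mul_nonneg (by positivity) (chainForm_nonneg _ _))
  · rw [hvalue_eq, hLf', chainObjective_eq_of_step hstep hfirst hlast, hx 0 hn]
    simp
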